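/- Fix an integer n ≥ 2, γ₁ > γ₂ > 0, a rate r > 0, and a survival function t ↦ ₜp_x : [0,∞) → (0,1] which is continuous, strictly decreasing, with ₀p_x = 1 and ₜp_x → 0 as t → ∞. Then there exists t₀ > 0 (depending on γ₁, γ₂ and n) such that Δ_{n,γ₁}(t) < Δ_{n,γ₂}(t) for all t ∈ (0, t₀). -/

import Mathlib

/-!
For fixed `q ∈ (0, 1)`, Hölder's inequality makes `γ ↦ log β_{n,γ}(q)` convex, while
`β_{n,0}(q) = 1 - (1 - q)^n < 1`. Interpolating between `0` and `γ₁` therefore gives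
`β_{n,γ₂}(q)^{1/γ₂} < β_{n,γ₁}(q)^{1/γ₁}` for `0 < γ₂ < γ₁`, so the normalising integral of
`D_{n,γ₁}` is strictly larger than that of `D_{n,γ₂}`. As `β_{n,γ}(1) = 1`, this means
`D_{n,γ₁}(0) < D_{n,γ₂}(0)`; by continuity the discounted payout rates stay in this order on an
initial interval, and integrating them gives `Δ_{n,γ₁} < Δ_{n,γ₂}` there.
-/

open MeasureTheory Real Finset

/-- `theta n γ p = E[(n/N(p))^{1-γ}]` where `N(p)-1 ~ Bin(n-1,p)`. -/
noncomputable def theta (n : ℕ) (γ p : ℝ) : ℝ :=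
  ∑ k ∈ Finset.range n,
    ((n - 1).choose k : ℝ) * p ^ k * (1 - p) ^ (n - 1 - k) *
      ((n : ℝ) / ((k : ℝ) + 1)) ^ (1 - γ)

/-- `beta n γ p = p * theta n γ p`. -/
noncomputable def beta (n : ℕ) (γ p : ℝ) : ℝ := p * theta n γ p

/-- Optimal tontine payout function. -/
noncomputable def Dopt (n : ℕ) (γ r : ℝ) (p : ℝ → ℝ) (t : ℝ) : ℝ :=
  beta n γ (p t) ^ (1 / γ) /
    ∫ s in Set.Ioi (0 : ℝ), Real.exp (-r * s) * beta n γ (p s) ^ (1 / γ)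

/-- Cumulative discounted payout of the optimal tontine. -/
noncomputable def Delta (n : ℕ) (γ r : ℝ) (p : ℝ → ℝ) (t : ℝ) : ℝ :=
  ∫ s in (0 : ℝ)..t, Real.exp (-r * s) * Dopt n γ r p s

theorem setIntegral_lt_setIntegral_of_forall_lt {X : Type*} [MeasurableSpace X] {μ : Measure X}
    {s : Set X} {f g : X → ℝ} (hs : MeasurableSet s) (hμs : μ s ≠ 0) (hf : IntegrableOn f s μ)
    (hg : IntegrableOn g s μ) (hlt : ∀ x ∈ s, f x < g x) :
    ∫ x in s, f x ∂μ < ∫ x in s, g x ∂μ := by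
  rw [← sub_pos, ← integral_sub hg hf]
  refine (setIntegral_pos_iff_support_of_nonneg_ae ?_ (hg.sub hf)).2 ?_
  · filter_upwards [ae_restrict_mem hs] with x hx
    exact sub_nonneg.2 (hlt x hx).le
  · have hsupp : Function.support (g - f) ∩ s = s :=
      Set.inter_eq_right.2 fun x hx => sub_ne_zero.2 (hlt x hx).ne'
    rwa [hsupp, pos_iff_ne_zero]

theorem integrableOn_Ioi_exp_neg_mul {r : ℝ} (hr : 0 < r) {f : ℝ → ℝ} (hf : Continuous f)
    {C : ℝ} (hC : ∀ s > 0, ‖f s‖ ≤ C) :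
    IntegrableOn (fun s => exp (-r * s) * f s) (Set.Ioi 0) := by
  simp_rw [mul_comm (exp _)]
  refine (exp_neg_integrableOn_Ioi 0 hr).bdd_mul hf.aestronglyMeasurable (c := C) ?_
  filter_upwards [ae_restrict_mem measurableSet_Ioi] with s hs
  exact hC s hs

theorem exists_pos_forall_intervalIntegral_lt {f g : ℝ → ℝ} (hf : Continuous f)
    (hg : Continuous g) (h₀ : f 0 < g 0) :
    ∃ t₀ > 0, ∀ t ∈ Set.Ioo 0 t₀, ∫ s in (0 : ℝ)..t, f s < ∫ s in (0 : ℝ)..t, g s := by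
  obtain ⟨ε, hε, hball⟩ :=
    Metric.eventually_nhds_iff.1 (hf.continuousAt.eventually_lt hg.continuousAt h₀)
  refine ⟨ε, hε, fun t ht => ?_⟩
  refine intervalIntegral.integral_lt_integral_of_continuousOn_of_le_of_exists_lt ht.1
    hf.continuousOn hg.continuousOn (fun x hx => (hball ?_).le) ⟨0, ⟨le_rfl, ht.1.le⟩, h₀⟩
  rw [Real.dist_eq, sub_zero, abs_of_pos hx.1]
  exact hx.2.trans_lt ht.2


theorem sum_mul_rpow_le_rpow_mul_rpow {ι : Type*} (s : Finset ι) {w c : ι → ℝ}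
    (hw : ∀ i ∈ s, 0 ≤ w i) (hc : ∀ i ∈ s, 0 < c i) {t : ℝ} (ht₀ : 0 < t) (ht₁ : t < 1)
    (a b : ℝ) :
    ∑ i ∈ s, w i * c i ^ ((1 - t) * a + t * b) ≤
      (∑ i ∈ s, w i * c i ^ a) ^ (1 - t) * (∑ i ∈ s, w i * c i ^ b) ^ t := by
  have hA : ∀ i ∈ s, 0 ≤ w i * c i ^ a := fun i hi =>
    mul_nonneg (hw i hi) (rpow_nonneg (hc i hi).le _)
  have hB : ∀ i ∈ s, 0 ≤ w i * c i ^ b := fun i hi =>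
    mul_nonneg (hw i hi) (rpow_nonneg (hc i hi).le _)
  have holder := inner_le_Lp_mul_Lq_of_nonneg s (HolderConjugate.one_sub_inv_inv ht₀ ht₁)
    (f := fun i => (w i * c i ^ a) ^ (1 - t)) (g := fun i => (w i * c i ^ b) ^ t)
    (fun i hi => rpow_nonneg (hA i hi) _) (fun i hi => rpow_nonneg (hB i hi) _)
  simp only [one_div, inv_inv] at holder
  rwa [sum_congr rfl fun i hi => rpow_rpow_inv (hA i hi) (sub_ne_zero.2 ht₁.ne'),
    sum_congr rfl fun i hi => rpow_rpow_inv (hB i hi) ht₀.ne',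
    sum_congr rfl fun i hi => ?_] at holder
  have hci := hc i hi
  rw [mul_rpow (hw i hi) (rpow_nonneg hci.le _), mul_rpow (hw i hi) (rpow_nonneg hci.le _),
    ← rpow_mul hci.le, ← rpow_mul hci.le, rpow_add hci]
  conv_rhs => rw [← rpow_one (w i), show (1 : ℝ) = (1 - t) + t by ring,
    rpow_add' (hw i hi) (by norm_num)]
  ring_nf

theorem theta_nonneg (n : ℕ) (γ : ℝ) {q : ℝ} (hq₀ : 0 ≤ q) (hq₁ : q ≤ 1) :
    0 ≤ theta n γ q :=
  sum_nonneg fun k _ => mul_nonneg (by have := sub_nonneg.2 hq₁; positivity)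
    (rpow_nonneg (by positivity) _)

theorem theta_pos {n : ℕ} (hn : 1 ≤ n) (γ : ℝ) {q : ℝ} (hq₀ : 0 < q) (hq₁ : q < 1) :
    0 < theta n γ q := by
  refine sum_pos (fun k hk => mul_pos ?_ (rpow_pos_of_pos (by positivity) _)) ⟨0, by simpa⟩
  have hchoose : (0 : ℝ) < (n - 1).choose k := by
    exact_mod_cast Nat.choose_pos (by have := mem_range.1 hk; omega)
  have := sub_pos.2 hq₁
  positivity

theorem continuous_beta (n : ℕ) (γ : ℝ) : Continuous (beta n γ) := by
  unfold beta theta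
  fun_prop

theorem beta_one {n : ℕ} (hn : 1 ≤ n) (γ : ℝ) : beta n γ 1 = 1 := by
  rw [beta, one_mul, theta, sum_eq_single_of_mem (n - 1) (by simp; omega)]
  · have hn' : ((n - 1 : ℕ) : ℝ) + 1 = n := by rw [Nat.cast_sub hn]; ring
    simp [hn', (by positivity : (n : ℝ) ≠ 0)]
  · intro k hk hne
    rw [sub_self, zero_pow (by have := mem_range.1 hk; omega), mul_zero, zero_mul]

theorem beta_zero (n : ℕ) (q : ℝ) : beta n 0 q = 1 - (1 - q) ^ n := by
  rcases n with _ | m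
  · simp [beta, theta]
  -- Since `(m + 1) * C(m, k) = (k + 1) * C(m + 1, k + 1)`, `q * θ_{m+1,0}(q)` is the binomial
  -- expansion of `(q + (1 - q)) ^ (m + 1)` without its `k = 0` term.
  have hbinom := add_pow q (1 - q) (m + 1)
  rw [add_sub_cancel, one_pow, sum_range_succ'] at hbinom
  simp only [pow_zero, one_mul, Nat.choose_zero_right, Nat.cast_one, mul_one, Nat.sub_zero]
    at hbinom
  rw [beta, theta, mul_sum, Nat.add_sub_cancel, eq_sub_iff_add_eq]
  conv_rhs => rw [hbinom]
  congr 1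
  refine sum_congr rfl fun k _ => ?_
  have hchoose : ((m : ℝ) + 1) * m.choose k = (m + 1).choose (k + 1) * ((k : ℝ) + 1) := by
    exact_mod_cast Nat.add_one_mul_choose_eq m k
  rw [Nat.add_sub_add_right, sub_zero, rpow_one]
  push_cast
  field_simp
  linear_combination q ^ (k + 1) * (1 - q) ^ (m - k) * hchoose

theorem beta_mul_le (n : ℕ) (γ : ℝ) {q t : ℝ} (hq₀ : 0 ≤ q) (hq₁ : q ≤ 1) (ht₀ : 0 < t)
    (ht₁ : t < 1) :
    beta n (t * γ) q ≤ beta n 0 q ^ (1 - t) * beta n γ q ^ t := by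
  have htheta : theta n (t * γ) q ≤ theta n 0 q ^ (1 - t) * theta n γ q ^ t := by
    simp only [theta, sub_zero]
    have := sum_mul_rpow_le_rpow_mul_rpow (range n)
      (w := fun k => ((n - 1).choose k : ℝ) * q ^ k * (1 - q) ^ (n - 1 - k))
      (c := fun k => (n : ℝ) / ((k : ℝ) + 1))
      (fun k _ => by have := sub_nonneg.2 hq₁; positivity)
      (fun k hk => div_pos (Nat.cast_pos.2 (Nat.zero_lt_of_lt (mem_range.1 hk))) (by positivity))
      ht₀ ht₁ 1 (1 - γ)
    rwa [show (1 - t) * 1 + t * (1 - γ) = 1 - t * γ by ring] at this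
  rw [beta, beta, beta, mul_rpow hq₀ (theta_nonneg n 0 hq₀ hq₁),
    mul_rpow hq₀ (theta_nonneg n γ hq₀ hq₁)]
  calc q * theta n (t * γ) q ≤ q * (theta n 0 q ^ (1 - t) * theta n γ q ^ t) :=
        mul_le_mul_of_nonneg_left htheta hq₀
    _ = (q ^ (1 - t) * q ^ t) * (theta n 0 q ^ (1 - t) * theta n γ q ^ t) := by
        rw [← rpow_add' hq₀ (by norm_num), sub_add_cancel, rpow_one]
    _ = _ := by ring

theorem beta_pos {n : ℕ} (hn : 1 ≤ n) (γ : ℝ) {q : ℝ} (hq₀ : 0 < q) (hq₁ : q < 1) :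
    0 < beta n γ q :=
  mul_pos hq₀ (theta_pos hn γ hq₀ hq₁)

theorem beta_rpow_inv_lt {n : ℕ} (hn : 1 ≤ n) {γ₁ γ₂ : ℝ} (hγ₂ : 0 < γ₂) (hγ : γ₂ < γ₁)
    {q : ℝ} (hq₀ : 0 < q) (hq₁ : q < 1) :
    beta n γ₂ q ^ (1 / γ₂) < beta n γ₁ q ^ (1 / γ₁) := by
  have hγ₁ : 0 < γ₁ := hγ₂.trans hγ
  set t := γ₂ / γ₁ with ht
  have ht₀ : 0 < t := div_pos hγ₂ hγ₁
  have ht₁ : t < 1 := (div_lt_one hγ₁).2 hγ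
  have hinterp := beta_mul_le n γ₁ hq₀.le hq₁.le ht₀ ht₁
  rw [ht, div_mul_cancel₀ _ hγ₁.ne'] at hinterp
  have hβ₀ : beta n 0 q < 1 := by
    rw [beta_zero, sub_lt_self_iff]
    exact pow_pos (sub_pos.2 hq₁) n
  have hβ₀' := beta_pos hn 0 hq₀ hq₁
  have hβ₁ := beta_pos hn γ₁ hq₀ hq₁
  calc beta n γ₂ q ^ (1 / γ₂)
      ≤ (beta n 0 q ^ (1 - t) * beta n γ₁ q ^ t) ^ (1 / γ₂) :=
        rpow_le_rpow (beta_pos hn γ₂ hq₀ hq₁).le hinterp (by positivity)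
    _ = beta n 0 q ^ ((1 - t) / γ₂) * beta n γ₁ q ^ (1 / γ₁) := by
        rw [mul_rpow (by positivity) (by positivity), ← rpow_mul hβ₀'.le, ← rpow_mul hβ₁.le, ht]
        congr 2 <;> field_simp
    _ < 1 * beta n γ₁ q ^ (1 / γ₁) :=
        mul_lt_mul_of_pos_right (rpow_lt_one hβ₀'.le hβ₀ (div_pos (sub_pos.2 ht₁) hγ₂))
          (by positivity)
    _ = beta n γ₁ q ^ (1 / γ₁) := one_mul _

section Tontine

variable {n : ℕ} {r : ℝ} {p : ℝ → ℝ}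

theorem continuous_beta_comp_rpow {γ : ℝ} (hγ : 0 < γ) (hp : Continuous p) :
    Continuous fun s => beta n γ (p s) ^ (1 / γ) :=
  ((continuous_beta n γ).comp hp).rpow_const fun _ => Or.inr (by positivity)

theorem continuous_Dopt {γ : ℝ} (hγ : 0 < γ) (hp : Continuous p) : Continuous (Dopt n γ r p) :=
  (continuous_beta_comp_rpow hγ hp).div_const _

theorem integrableOn_exp_neg_mul_beta_rpow {γ : ℝ} (hγ : 0 < γ) (hr : 0 < r)
    (hp : Continuous p) (hp01 : ∀ s > 0, p s ∈ Set.Icc 0 1) :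
    IntegrableOn (fun s => exp (-r * s) * beta n γ (p s) ^ (1 / γ)) (Set.Ioi 0) := by
  obtain ⟨C, hC⟩ := isCompact_Icc.exists_bound_of_continuousOn
    (continuous_beta_comp_rpow (p := id) hγ continuous_id).continuousOn
  exact integrableOn_Ioi_exp_neg_mul hr (continuous_beta_comp_rpow hγ hp)
    fun s hs => hC _ (hp01 s hs)

theorem Dopt_zero_lt_of_lt (hn : 1 ≤ n) {γ₁ γ₂ : ℝ} (hγ₂ : 0 < γ₂) (hγ : γ₂ < γ₁) (hr : 0 < r)
    (hp : Continuous p) (hp0 : p 0 = 1) (hp01 : ∀ s > 0, p s ∈ Set.Ioo 0 1) :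
    Dopt n γ₁ r p 0 < Dopt n γ₂ r p 0 := by
  have hint : ∀ γ > 0,
      IntegrableOn (fun s => exp (-r * s) * beta n γ (p s) ^ (1 / γ)) (Set.Ioi 0) :=
    fun γ hγ => integrableOn_exp_neg_mul_beta_rpow hγ hr hp fun s hs =>
      Set.Ioo_subset_Icc_self (hp01 s hs)
  have hpos : 0 < ∫ s in Set.Ioi 0, exp (-r * s) * beta n γ₂ (p s) ^ (1 / γ₂) := by
    simpa using setIntegral_lt_setIntegral_of_forall_lt measurableSet_Ioi (by simp)
      integrableOn_zero (hint γ₂ hγ₂) fun s hs =>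
        mul_pos (exp_pos _) (rpow_pos_of_pos (beta_pos hn γ₂ (hp01 s hs).1 (hp01 s hs).2) _)
  have hlt := setIntegral_lt_setIntegral_of_forall_lt measurableSet_Ioi (by simp)
    (hint γ₂ hγ₂) (hint γ₁ (hγ₂.trans hγ)) fun s hs =>
      mul_lt_mul_of_pos_left (beta_rpow_inv_lt hn hγ₂ hγ (hp01 s hs).1 (hp01 s hs).2) (exp_pos _)
  simp only [Dopt, hp0, beta_one hn, one_rpow]
  exact one_div_lt_one_div_of_lt hpos hlt

end Tontine

theorem depletion_initial_period_general
    (n : ℕ) (hn : 2 ≤ n) (γ₁ γ₂ : ℝ) (hγ₂ : 0 < γ₂) (hγ : γ₂ < γ₁)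
    (r : ℝ) (hr : 0 < r)
    (p : ℝ → ℝ) (hcont : Continuous p) (hanti : StrictAntiOn p (Set.Ici 0))
    (hmem : ∀ t, 0 ≤ t → p t ∈ Set.Ioc (0 : ℝ) 1) (hp0 : p 0 = 1) :
    ∃ t₀ > 0, ∀ t ∈ Set.Ioo (0 : ℝ) t₀, Delta n γ₁ r p t < Delta n γ₂ r p t := by
  have hp01 : ∀ s > 0, p s ∈ Set.Ioo 0 1 := fun s hs =>
    ⟨(hmem s hs.le).1, hp0 ▸ hanti Set.self_mem_Ici (Set.mem_Ici.2 hs.le) hs⟩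
  have hcontD : ∀ γ > 0, Continuous fun s => exp (-r * s) * Dopt n γ r p s := fun γ hγ => by
    have := continuous_Dopt (n := n) (r := r) hγ hcont
    fun_prop
  exact exists_pos_forall_intervalIntegral_lt (hcontD γ₁ (hγ₂.trans hγ)) (hcontD γ₂ hγ₂)
    (by simpa using Dopt_zero_lt_of_lt (by omega) hγ₂ hγ hr hcont hp0 hp01)

/-- for `γ₁ > γ₂ > 0` there is an initial period `(0, t₀)` on which
`Δ_{n,γ₁}(t) < Δ_{n,γ₂}(t)`. -/
theorem depletion_initial_period
    (n : ℕ) (hn : 2 ≤ n) (γ₁ γ₂ : ℝ) (hγ₂ : 0 < γ₂) (hγ : γ₂ < γ₁)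
    (r : ℝ) (hr : 0 < r)
    (p : ℝ → ℝ) (hcont : Continuous p) (hanti : StrictAntiOn p (Set.Ici 0))
    (hmem : ∀ t, 0 ≤ t → p t ∈ Set.Ioc (0 : ℝ) 1) (hp0 : p 0 = 1)
    (hlim : Filter.Tendsto p Filter.atTop (nhds 0)) :
    ∃ t₀ > 0, ∀ t ∈ Set.Ioo (0 : ℝ) t₀, Delta n γ₁ r p t < Delta n γ₂ r p t :=
  depletion_initial_period_general n hn γ₁ γ₂ hγ₂ hγ r hr p hcont hanti hmem hp0
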